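/- Let f : ℝ^{n} × ℝ^{m} → ℝ ∪ {+∞} be defined by f(z, c, u) = −Σ_t U_t(c_t) if Δz_t + c_t + u_t ∈ C_t and z_t ∈ D_t for all t, and +∞ otherwise, where U_t are finite concave functions and C_t, D_t are nonempty closed convex sets containing 0. Then the recession function is f^∞(z, c, u) = −Σ_t U_t^∞(c_t) if Δz_t + c_t + u_t ∈ C_t^∞ and z_t ∈ D_t^∞ for all t, and +∞ otherwise. -/

import Mathlib

/-!
Along a ray `p̄ + λ p` from a feasible point the integrand is finite exactly while the ray stays
feasible. For closed convex sets that holds for all `λ > 0` iff the direction lies in the recession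
cone (Rockafellar, Thm 8.3); otherwise some difference quotient is `+∞`. On the recession cone the
difference quotient is `-∑_t q_t(λ)` with `q_t(λ) = (U_t(c̄_t + λ c_t) - U_t(c̄_t)) / λ`. Each `q_t`
is antitone by concavity, so the supremum over `λ` of `-∑_t q_t` is `-∑_t inf_λ q_t`, the infimum
of a sum of antitone families being the limit at infinity. Finally the concave recession function
does not depend on the base point: midpoint concavity gives `q_x(λ) ≥ q_y(2λ) + O(1/λ)`.
-/

open scoped Classical

noncomputable def recFn {E : Type*} [AddCommGroup E] [Module ℝ E]
    (h : E → EReal) (xbar x : E) : EReal :=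
  ⨆ l : {l : ℝ // 0 < l}, (((l : ℝ)⁻¹ : ℝ) : EReal) * (h (xbar + (l : ℝ) • x) - h xbar)

/-- Concave recession function of a finite concave function, with values in `EReal`. -/
noncomputable def cRec {E : Type*} [AddCommGroup E] [Module ℝ E]
    (U : E → ℝ) (cbar c : E) : EReal :=
  ⨅ l : {l : ℝ // 0 < l}, ((((l : ℝ)⁻¹ * (U (cbar + (l : ℝ) • c) - U cbar)) : ℝ) : EReal)

/-- Recession cone of a set. -/
def recCone {E : Type*} [AddCommGroup E] [Module ℝ E] (C : Set E) : Set E :=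
  {d | ∀ x ∈ C, ∀ l : ℝ, 0 ≤ l → x + l • d ∈ C}

/-- Backward difference of a portfolio process, with `z₋₁ = 0`. -/
def delta {T d : ℕ} (z : Fin (T + 1) → (Fin d → ℝ)) (t : Fin (T + 1)) : Fin d → ℝ :=
  z t - (if (t : ℕ) = 0 then 0 else z (t - 1))

open Filter Topology

namespace EReal

lemma iSup_neg_eq_neg_iInf {ι : Sort*} (g : ι → EReal) : ⨆ i, -g i = -⨅ i, g i :=
  le_antisymm (iSup_le fun i => EReal.neg_le_neg_iff.mpr (iInf_le _ i))
    (EReal.neg_le.mp (le_iInf fun i => EReal.neg_le.mpr (le_iSup (fun i => -g i) i)))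

variable {ι : Type*}

lemma tendsto_coe_atTop_iInf [Preorder ι] {g : ι → ℝ} (hg : Antitone g) :
    Tendsto (fun i => (g i : EReal)) atTop (𝓝 (⨅ i, (g i : EReal))) :=
  tendsto_atTop_iInf fun _ _ hij => EReal.coe_le_coe_iff.2 (hg hij)

lemma iInf_coe_ne_top [Nonempty ι] (g : ι → ℝ) : ⨅ i, (g i : EReal) ≠ ⊤ :=
  ((iInf_le _ (Classical.arbitrary ι)).trans_lt (EReal.coe_lt_top _)).ne

lemma iInf_coe_add_of_antitone [SemilatticeSup ι] [Nonempty ι] {a b : ι → ℝ} (ha : Antitone a)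
    (hb : Antitone b) :
    ⨅ i, ((a i + b i : ℝ) : EReal) = (⨅ i, (a i : EReal)) + ⨅ i, (b i : EReal) := by
  refine tendsto_nhds_unique (tendsto_coe_atTop_iInf (ha.add hb)) ?_
  simp only [EReal.coe_add]
  exact (EReal.continuousAt_add (Or.inl (iInf_coe_ne_top a)) (Or.inr (iInf_coe_ne_top b))).tendsto
    |>.comp ((tendsto_coe_atTop_iInf ha).prodMk_nhds (tendsto_coe_atTop_iInf hb))

lemma iInf_coe_sum_of_antitone [SemilatticeSup ι] [Nonempty ι] {κ : Type*} {q : κ → ι → ℝ}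
    (hq : ∀ t, Antitone (q t)) (s : Finset κ) :
    ⨅ i, ((∑ t ∈ s, q t i : ℝ) : EReal) = ∑ t ∈ s, ⨅ i, (q t i : EReal) := by
  induction s using Finset.induction_on with
  | empty => simp
  | insert a s ha ih =>
    simp only [Finset.sum_insert ha]
    rw [iInf_coe_add_of_antitone (hq a) fun i j hij => Finset.sum_le_sum fun t _ => hq t hij, ih]

end EReal

section Concave

variable {E : Type*} [AddCommGroup E] [Module ℝ E] {U : E → ℝ}

lemma ConcaveOn.antitone_recQuot (hU : ConcaveOn ℝ Set.univ U) (x c : E) :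
    Antitone fun l : {l : ℝ // 0 < l} => (l : ℝ)⁻¹ * (U (x + (l : ℝ) • c) - U x) := by
  intro l₁ l₂ hl
  have key := (hU.comp_affineMap (AffineMap.lineMap x (x + c))).neg.secant_mono
    (Set.mem_univ 0) (Set.mem_univ l₁.1) (Set.mem_univ l₂.1) l₁.2.ne' l₂.2.ne' hl
  have hline : ∀ l : ℝ, AffineMap.lineMap x (x + c) l = x + l • c := fun l => by
    rw [AffineMap.lineMap_apply_module', add_sub_cancel_left, add_comm]
  simp only [Pi.neg_apply, Function.comp_apply, hline, zero_smul, add_zero, sub_zero]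
    at key
  rw [← neg_le_neg_iff]
  convert key using 1 <;> ring

lemma ConcaveOn.le_recQuot_of_forall_le (hU : ConcaveOn ℝ Set.univ U) {x y c : E} {m : ℝ}
    (hm : ∀ l : ℝ, 0 < l → m ≤ l⁻¹ * (U (y + l • c) - U y)) {l : ℝ} (hl : 0 < l) :
    m ≤ l⁻¹ * (U (x + l • c) - U x) := by
  set K := U y + U ((2 : ℝ) • x - y) - 2 * U x
  have bound : ∀ L : ℝ, l ≤ L → m + K / (2 * L) ≤ l⁻¹ * (U (x + l • c) - U x) := by
    intro L hL
    have hL0 : 0 < L := hl.trans_le hL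
    -- `x + L c` is the midpoint of `y + 2L c` and `2x - y`
    have hmid : 1 / 2 * U (y + (2 * L) • c) + 1 / 2 * U ((2 : ℝ) • x - y) ≤ U (x + L • c) := by
      have h := hU.2 (Set.mem_univ (y + (2 * L) • c)) (Set.mem_univ ((2 : ℝ) • x - y))
        (by norm_num : (0 : ℝ) ≤ 1 / 2) (by norm_num : (0 : ℝ) ≤ 1 / 2) (by norm_num)
      have e : (1 / 2 : ℝ) • (y + (2 * L) • c) + (1 / 2 : ℝ) • ((2 : ℝ) • x - y) = x + L • c := by
        module
      rwa [e] at h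
    have hq := (le_inv_mul_iff₀ (by positivity)).mp (hm (2 * L) (by positivity))
    have hanti := hU.antitone_recQuot x c (show (⟨l, hl⟩ : {l : ℝ // 0 < l}) ≤ ⟨L, hL0⟩ from hL)
    have e : L⁻¹ * (U (x + L • c) - U x) - (m + K / (2 * L))
        = (2 * U (x + L • c) - U ((2 : ℝ) • x - y) - U y - m * (2 * L)) / (2 * L) := by
      field_simp
      ring
    have : 0 ≤ L⁻¹ * (U (x + L • c) - U x) - (m + K / (2 * L)) := by
      rw [e]
      exact div_nonneg (by linarith) (by positivity)
    exact (sub_nonneg.mp this).trans hanti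
  refine le_of_tendsto ?_ (eventually_atTop.2 ⟨l, bound⟩)
  simpa using tendsto_const_nhds.add (tendsto_const_nhds.div_atTop
    (tendsto_id.const_mul_atTop (by norm_num : (0 : ℝ) < 2)))

lemma ConcaveOn.cRec_le_cRec (hU : ConcaveOn ℝ Set.univ U) (x y c : E) :
    cRec U y c ≤ cRec U x c :=
  le_iInf fun l => EReal.ge_of_forall_gt_iff_ge.1 fun _ hz => EReal.coe_le_coe_iff.2 <|
    hU.le_recQuot_of_forall_le (fun l' hl' => EReal.coe_le_coe_iff.1 <|
      hz.le.trans (iInf_le _ (⟨l', hl'⟩ : {l : ℝ // 0 < l}))) l.2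

lemma ConcaveOn.cRec_eq_cRec (hU : ConcaveOn ℝ Set.univ U) (x y c : E) :
    cRec U x c = cRec U y c :=
  le_antisymm (hU.cRec_le_cRec y x c) (hU.cRec_le_cRec x y c)

lemma ConcaveOn.iSup_neg_sum_recQuot {κ : Type*} [Fintype κ] {U : κ → E → ℝ}
    (hU : ∀ t, ConcaveOn ℝ Set.univ (U t)) (cbar c : κ → E) :
    ⨆ l : {l : ℝ // 0 < l}, (((l : ℝ)⁻¹ * (-(∑ t, U t (cbar t + (l : ℝ) • c t))
      - -(∑ t, U t (cbar t))) : ℝ) : EReal) = -∑ t, cRec (U t) 0 (c t) := by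
  have hsum : ∀ l : ℝ, l⁻¹ * (-(∑ t, U t (cbar t + l • c t)) - -(∑ t, U t (cbar t)))
      = -∑ t, l⁻¹ * (U t (cbar t + l • c t) - U t (cbar t)) := fun l => by
    rw [← Finset.mul_sum, Finset.sum_sub_distrib]
    ring
  simp only [hsum, EReal.coe_neg, EReal.iSup_neg_eq_neg_iInf,
    EReal.iInf_coe_sum_of_antitone fun t => (hU t).antitone_recQuot (cbar t) (c t)]
  exact congrArg Neg.neg (Finset.sum_congr rfl fun t _ => (hU t).cRec_eq_cRec (cbar t) 0 (c t))

end Concave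

lemma forall_pos_add_smul_mem_iff_mem_recCone {E : Type*} [AddCommGroup E] [Module ℝ E]
    [TopologicalSpace E] [IsTopologicalAddGroup E] [ContinuousSMul ℝ E] {C : Set E}
    (hcl : IsClosed C) (hcv : Convex ℝ C) {x d : E} (hx : x ∈ C) :
    (∀ l : ℝ, 0 < l → x + l • d ∈ C) ↔ d ∈ recCone C := by
  refine ⟨fun h v hv l hl => ?_, fun hd l hl => hd x hx l hl.le⟩
  rcases hl.eq_or_lt with rfl | hl
  · simpa using hv
  -- `v + l d` is the limit, as `s → 0⁺`, of `(1 - s) v + s (x + (l / s) d) ∈ C`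
  have hlim : Tendsto (fun s : ℝ => v + s • (x - v) + l • d) (𝓝[>] 0) (𝓝 (v + l • d)) := by
    have hcont : Continuous fun s : ℝ => v + s • (x - v) + l • d := by fun_prop
    simpa using tendsto_nhdsWithin_of_tendsto_nhds (hcont.tendsto 0)
  refine hcl.mem_of_tendsto hlim ?_
  filter_upwards [Ioo_mem_nhdsGT one_pos] with s ⟨hs0, hs1⟩
  have e : (1 - s) • v + s • (x + (l / s) • d) = v + s • (x - v) + l • d := by
    rw [smul_add, smul_smul, mul_div_cancel₀ _ hs0.ne']
    module
  rw [← e]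
  exact hcv hv (h (l / s) (by positivity)) (by linarith) hs0.le (by ring)

lemma recFn_ite_top {E : Type*} [AddCommGroup E] [Module ℝ E] {K : Set E} [DecidablePred (· ∈ K)]
    {g : E → ℝ} {xbar : E} (hxbar : xbar ∈ K) (x : E) :
    recFn (fun y => if y ∈ K then (g y : EReal) else ⊤) xbar x =
      if ∀ l : ℝ, 0 < l → xbar + l • x ∈ K then
        ⨆ l : {l : ℝ // 0 < l}, (((l : ℝ)⁻¹ * (g (xbar + (l : ℝ) • x) - g xbar) : ℝ) : EReal)
      else ⊤ := by
  unfold recFn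
  dsimp only
  by_cases hray : ∀ l : ℝ, 0 < l → xbar + l • x ∈ K
  · rw [if_pos hray]
    refine iSup_congr fun l => ?_
    rw [if_pos (hray l l.2), if_pos hxbar, ← EReal.coe_sub, ← EReal.coe_mul]
  · rw [if_neg hray]
    push Not at hray
    obtain ⟨l, hl, hout⟩ := hray
    refine top_unique (le_iSup_of_le ⟨l, hl⟩ ?_)
    rw [if_neg hout, if_pos hxbar, EReal.top_sub_coe, EReal.coe_mul_top_of_pos (inv_pos.2 hl)]

section Consumption

variable {T d : ℕ}

lemma delta_add_smul (z w : Fin (T + 1) → Fin d → ℝ) (l : ℝ) (t : Fin (T + 1)) :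
    delta (z + l • w) t = delta z t + l • delta w t := by
  unfold delta
  split_ifs
  · simp only [Pi.add_apply, Pi.smul_apply, sub_zero]
  · simp only [Pi.add_apply, Pi.smul_apply, smul_sub]
    abel

def feasibleSet (C D : Fin (T + 1) → Set (Fin d → ℝ)) :
    Set ((Fin (T + 1) → Fin d → ℝ) × (Fin (T + 1) → Fin d → ℝ) × (Fin (T + 1) → Fin d → ℝ)) :=
  {p | ∀ t, delta p.1 t + p.2.1 t + p.2.2 t ∈ C t ∧ p.1 t ∈ D t}

lemma forall_pos_add_smul_mem_feasibleSet_iff {C D : Fin (T + 1) → Set (Fin d → ℝ)}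
    (hCclosed : ∀ t, IsClosed (C t)) (hCconv : ∀ t, Convex ℝ (C t))
    (hDclosed : ∀ t, IsClosed (D t)) (hDconv : ∀ t, Convex ℝ (D t))
    {pbar : (Fin (T + 1) → Fin d → ℝ) × (Fin (T + 1) → Fin d → ℝ) × (Fin (T + 1) → Fin d → ℝ)}
    (hpbar : pbar ∈ feasibleSet C D) (p : (Fin (T + 1) → Fin d → ℝ) × (Fin (T + 1) → Fin d → ℝ)
      × (Fin (T + 1) → Fin d → ℝ)) :
    (∀ l : ℝ, 0 < l → pbar + l • p ∈ feasibleSet C D) ↔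
      ∀ t, delta p.1 t + p.2.1 t + p.2.2 t ∈ recCone (C t) ∧ p.1 t ∈ recCone (D t) := by
  have hray : ∀ (l : ℝ) t,
      delta (pbar.1 + l • p.1) t + (pbar.2.1 t + l • p.2.1 t) + (pbar.2.2 t + l • p.2.2 t)
        = (delta pbar.1 t + pbar.2.1 t + pbar.2.2 t) + l • (delta p.1 t + p.2.1 t + p.2.2 t) :=
    fun l t => by
      rw [delta_add_smul]
      module
  simp only [feasibleSet, Set.mem_ofPred_eq, Prod.fst_add, Prod.snd_add, Prod.smul_fst,
    Prod.smul_snd, Pi.add_apply, Pi.smul_apply, hray]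
  refine ⟨fun h t => ⟨?_, ?_⟩, fun h l hl t => ⟨?_, ?_⟩⟩
  · exact (forall_pos_add_smul_mem_iff_mem_recCone (hCclosed t) (hCconv t) (hpbar t).1).1
      fun l hl => (h l hl t).1
  · exact (forall_pos_add_smul_mem_iff_mem_recCone (hDclosed t) (hDconv t) (hpbar t).2).1
      fun l hl => (h l hl t).2
  · exact (h t).1 _ (hpbar t).1 l hl.le
  · exact (h t).2 _ (hpbar t).2 l hl.le

end Consumption

theorem stmt19_general (T d : ℕ) (U : Fin (T + 1) → (Fin d → ℝ) → ℝ)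
    (hU : ∀ t, ConcaveOn ℝ Set.univ (U t))
    (C D : Fin (T + 1) → Set (Fin d → ℝ))
    (hCclosed : ∀ t, IsClosed (C t))
    (hCconv : ∀ t, Convex ℝ (C t))
    (hDclosed : ∀ t, IsClosed (D t))
    (hDconv : ∀ t, Convex ℝ (D t))
    (f : (Fin (T + 1) → (Fin d → ℝ)) × (Fin (T + 1) → (Fin d → ℝ))
        × (Fin (T + 1) → (Fin d → ℝ)) → EReal)
    (hf : ∀ p, f p =
      if ∀ t, delta p.1 t + p.2.1 t + p.2.2 t ∈ C t ∧ p.1 t ∈ D t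
      then (((-(∑ t, U t (p.2.1 t))) : ℝ) : EReal) else ⊤) :
    ∀ pbar, f pbar ≠ ⊤ → ∀ p,
      recFn f pbar p =
        if ∀ t, delta p.1 t + p.2.1 t + p.2.2 t ∈ recCone (C t) ∧ p.1 t ∈ recCone (D t)
        then -(∑ t, cRec (U t) 0 (p.2.1 t)) else ⊤ := by
  intro pbar hbar p
  have hpbar : pbar ∈ feasibleSet C D := by
    by_contra h
    exact hbar ((hf pbar).trans (if_neg h))
  have hfeas : f = fun p => if p ∈ feasibleSet C D then ((-(∑ t, U t (p.2.1 t)) : ℝ) : EReal)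
      else ⊤ :=
    funext fun p => (hf p).trans (if_congr Iff.rfl rfl rfl)
  rw [hfeas, recFn_ite_top hpbar]
  refine if_congr (forall_pos_add_smul_mem_feasibleSet_iff hCclosed hCconv hDclosed hDconv
    hpbar p) ?_ rfl
  simpa using ConcaveOn.iSup_neg_sum_recQuot hU pbar.2.1 p.2.1

/-- the recession function of the optimal-consumption integrand
`f(z,c,u) = −Σ_t U_t(c_t)` on `{Δz_t + c_t + u_t ∈ C_t, z_t ∈ D_t}` (`+∞` elsewhere)
is `f^∞(z,c,u) = −Σ_t U_t^∞(c_t)` on `{Δz_t + c_t + u_t ∈ C_t^∞, z_t ∈ D_t^∞}`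
(`+∞` elsewhere). -/
theorem stmt19 (T d : ℕ) (U : Fin (T + 1) → (Fin d → ℝ) → ℝ)
    (hU : ∀ t, ConcaveOn ℝ Set.univ (U t))
    (C D : Fin (T + 1) → Set (Fin d → ℝ))
    (hCne : ∀ t, (C t).Nonempty) (hCclosed : ∀ t, IsClosed (C t))
    (hCconv : ∀ t, Convex ℝ (C t)) (hC0 : ∀ t, (0 : Fin d → ℝ) ∈ C t)
    (hDne : ∀ t, (D t).Nonempty) (hDclosed : ∀ t, IsClosed (D t))
    (hDconv : ∀ t, Convex ℝ (D t)) (hD0 : ∀ t, (0 : Fin d → ℝ) ∈ D t)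
    (f : (Fin (T + 1) → (Fin d → ℝ)) × (Fin (T + 1) → (Fin d → ℝ))
        × (Fin (T + 1) → (Fin d → ℝ)) → EReal)
    (hf : ∀ p, f p =
      if ∀ t, delta p.1 t + p.2.1 t + p.2.2 t ∈ C t ∧ p.1 t ∈ D t
      then (((-(∑ t, U t (p.2.1 t))) : ℝ) : EReal) else ⊤) :
    ∀ pbar, f pbar ≠ ⊤ → ∀ p,
      recFn f pbar p =
        if ∀ t, delta p.1 t + p.2.1 t + p.2.2 t ∈ recCone (C t) ∧ p.1 t ∈ recCone (D t)
        then -(∑ t, cRec (U t) 0 (p.2.1 t)) else ⊤ :=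
  stmt19_general T d U hU C D hCclosed hCconv hDclosed hDconv f hf
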